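/- arXiv:math-ph/0512046 — 2 statements merged into one kernel-verified Lean document; each statement's English description precedes it below -/
import Mathlib

section
/- For dimension n = p + q > 2, every conformal Killing factor κ on an open connected subset of ℝ^n (i.e., a twice differentiable function satisfying (n−2)∂_μ∂_ν κ + g_{μν} Δ_g κ = 0 for all μ, ν) is an affine function: κ(x) = α_ν x^ν + λ for constants α_ν, λ ∈ ℝ. -/
/-!
Contracting the equation with the inverse metric `g^{μν}` gives `(2n - 2) Δκ = 0`, so `Δκ = 0`,
and then the equation itself says `(n - 2) ∂_μ∂_ν κ = 0`: the Hessian of `κ` vanishes on `U`.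
On a connected open set this makes `dκ` constant, equal to some linear form `L`, and then
`κ - L` is constant.
-/

open Finset

theorem eq_zero_of_conformal_killing_equation {n : ℕ} (hn : 2 < n) {g H : Fin n → Fin n → ℝ}
    (hg : ∀ α, g α α * g α α = 1)
    (hH : ∀ μ ν, ((n : ℝ) - 2) * H μ ν + g μ ν * ∑ α, g α α * H α α = 0) (μ ν : Fin n) :
    H μ ν = 0 := by
  have hn' : (2 : ℝ) < n := by exact_mod_cast hn
  set T := ∑ α, g α α * H α α
  have hcontract : ∀ β, g β β * (((n : ℝ) - 2) * H β β + g β β * T) =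
      ((n : ℝ) - 2) * (g β β * H β β) + T := fun β => by linear_combination T * hg β
  have htrace : (2 * (n : ℝ) - 2) * T = 0 := calc
    (2 * (n : ℝ) - 2) * T = ∑ β, g β β * (((n : ℝ) - 2) * H β β + g β β * T) := by
      simp only [hcontract, sum_add_distrib, ← mul_sum, sum_const, card_univ, Fintype.card_fin,
        nsmul_eq_mul, T]
      ring
    _ = 0 := sum_eq_zero fun β _ => by rw [hH, mul_zero]
  have hT : T = 0 := (mul_eq_zero.mp htrace).resolve_left (by linarith)
  have hμν := hH μ ν
  rw [hT, mul_zero, add_zero] at hμν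
  exact (mul_eq_zero.mp hμν).resolve_left (by linarith)

theorem ContinuousLinearMap.ext_pi_single {ι M : Type*} [Finite ι] [DecidableEq ι]
    [AddCommMonoid M] [Module ℝ M] [TopologicalSpace M] {f f' : (ι → ℝ) →L[ℝ] M}
    (h : ∀ i, f (Pi.single i 1) = f' (Pi.single i 1)) : f = f' :=
  ContinuousLinearMap.coe_injective <| (Pi.basisFun ℝ ι).ext fun i => by simpa using h i

theorem ContinuousLinearMap.apply_eq_sum_pi_single {ι : Type*} [Fintype ι] [DecidableEq ι]
    (L : (ι → ℝ) →L[ℝ] ℝ) (x : ι → ℝ) : L x = ∑ i, L (Pi.single i 1) * x i := by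
  conv_lhs => rw [pi_eq_sum_univ' x]
  simp [mul_comm]

theorem fderiv_fderiv_eq_zero_of_partials {ι F : Type*} [Fintype ι] [DecidableEq ι]
    [NormedAddCommGroup F] [NormedSpace ℝ F] {f : (ι → ℝ) → F} {x : ι → ℝ}
    (hf : DifferentiableAt ℝ (fderiv ℝ f) x)
    (h : ∀ μ ν, fderiv ℝ (fun y => fderiv ℝ f y (Pi.single ν 1)) x (Pi.single μ 1) = 0) :
    fderiv ℝ (fderiv ℝ f) x = 0 :=
  ContinuousLinearMap.ext_pi_single fun μ => ContinuousLinearMap.ext_pi_single fun ν => by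
    simpa [fderiv_clm_apply hf (differentiableAt_const _)] using h μ ν

theorem IsOpen.exists_eq_add_of_fderiv_fderiv_eq_zero {E F : Type*} [NormedAddCommGroup E]
    [NormedSpace ℝ E] [NormedAddCommGroup F] [NormedSpace ℝ F] {s : Set E} {f : E → F}
    (hs : IsOpen s) (hs' : IsPreconnected s) (hf : DifferentiableOn ℝ f s)
    (hf' : DifferentiableOn ℝ (fderiv ℝ f) s) (hf'' : s.EqOn (fderiv ℝ (fderiv ℝ f)) 0) :
    ∃ (L : E →L[ℝ] F) (c : F), ∀ x ∈ s, f x = L x + c := by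
  obtain ⟨L, hL⟩ := hs.exists_is_const_of_fderiv_eq_zero hs' hf' hf''
  obtain ⟨c, hc⟩ := hs.exists_eq_add_of_fderiv_eq hs' hf L.differentiableOn
    fun x hx => (hL x hx).trans L.fderiv.symm
  exact ⟨L, c, hc⟩

theorem conformal_killing_factor_affine_general
    (p n : ℕ) (hdim : 2 < n)
    (U : Set (Fin n → ℝ)) (hU : IsOpen U) (hUconn : IsConnected U)
    (g : Fin n → Fin n → ℝ)
    (hg : ∀ μ ν, g μ ν = if μ = ν then (if (μ : ℕ) < p then (1 : ℝ) else -1) else 0)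
    (κ : (Fin n → ℝ) → ℝ) (hκ : ContDiffOn ℝ 2 κ U)
    (hPDE : ∀ x ∈ U, ∀ μ ν : Fin n,
      ((n : ℝ) - 2) *
          fderiv ℝ (fun y => fderiv ℝ κ y (Pi.single ν 1)) x (Pi.single μ 1)
        + g μ ν *
          (∑ α : Fin n, g α α *
            fderiv ℝ (fun y => fderiv ℝ κ y (Pi.single α 1)) x (Pi.single α 1)) = 0) :
    ∃ (a : Fin n → ℝ) (lam : ℝ), ∀ x ∈ U, κ x = (∑ ν, a ν * x ν) + lam := by
  have hg_sq : ∀ α, g α α * g α α = 1 := fun α => by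
    rw [hg, if_pos rfl]; split_ifs <;> norm_num
  have hκ' : DifferentiableOn ℝ (fderiv ℝ κ) U :=
    (hκ.fderiv_of_isOpen hU (m := 1) (by norm_num)).differentiableOn one_ne_zero
  obtain ⟨L, c, hL⟩ := hU.exists_eq_add_of_fderiv_fderiv_eq_zero hUconn.isPreconnected
    (hκ.differentiableOn (by norm_num)) hκ' fun x hx =>
      fderiv_fderiv_eq_zero_of_partials (hκ'.differentiableAt (hU.mem_nhds hx))
        (eq_zero_of_conformal_killing_equation hdim hg_sq (hPDE x hx))
  exact ⟨fun ν => L (Pi.single ν 1), c, fun x hx => by rw [hL x hx, L.apply_eq_sum_pi_single]⟩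

/-- For n = p + q > 2, every conformal Killing factor κ on an open
connected subset of ℝ^n (twice differentiable, satisfying
(n−2)∂_μ∂_ν κ + g_{μν} Δ_g κ = 0) is affine: κ(x) = α_ν x^ν + λ. -/
theorem conformal_killing_factor_affine
    (p q n : ℕ) (hn : n = p + q) (hdim : 2 < n)
    (U : Set (Fin n → ℝ)) (hU : IsOpen U) (hUconn : IsConnected U)
    (g : Fin n → Fin n → ℝ)
    (hg : ∀ μ ν, g μ ν = if μ = ν then (if (μ : ℕ) < p then (1 : ℝ) else -1) else 0)
    (κ : (Fin n → ℝ) → ℝ) (hκ : ContDiffOn ℝ 2 κ U)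
    (hPDE : ∀ x ∈ U, ∀ μ ν : Fin n,
      ((n : ℝ) - 2) *
          fderiv ℝ (fun y => fderiv ℝ κ y (Pi.single ν 1)) x (Pi.single μ 1)
        + g μ ν *
          (∑ α : Fin n, g α α *
            fderiv ℝ (fun y => fderiv ℝ κ y (Pi.single α 1)) x (Pi.single α 1)) = 0) :
    ∃ (a : Fin n → ℝ) (lam : ℝ), ∀ x ∈ U, κ x = (∑ ν, a ν * x ν) + lam :=
  conformal_killing_factor_affine_general p n hdim U hU hUconn g hg κ hκ hPDE
end

section
/- If a smooth vector field X on an open connected subset of ℝ^n (n ≥ 2, flat metric g of signature (p,q)) satisfies the Killing equation ∂_ν X_μ + ∂_μ X_ν = 0, then X is affine: there exist constants ω^μ_ν and c^μ with ω antisymmetric (with respect to g) such that X^μ(x) = ω^μ_ν x^ν + c^μ. -/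
/-!
Lowering the index with `g`, the Killing equation says that `g(DX v, w)` is antisymmetric in
`v, w`. Differentiating once more, `T(u, v, w) = g(D²X(u, v), w)` is symmetric in `u, v` and
antisymmetric in `v, w`; going around the six permutations gives `T = -T`, so `D²X = 0` as `g`
is nondegenerate. Hence `DX` is constant on the connected set `U` and `X` is affine there.
-/
open Filter Topology ContinuousLinearMap

theorem eq_zero_of_symm_of_antisymm {α M : Type*} [AddCommGroup M] [IsAddTorsionFree M]
    {T : α → α → α → M} (hsymm : ∀ u v w, T u v w = T v u w)
    (hanti : ∀ u v w, T u v w = -T u w v) (u v w : α) : T u v w = 0 := by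
  have h : T u v w = -T u v w := calc
    T u v w = -T u w v := hanti ..
    _ = -T w u v := by rw [hsymm]
    _ = T w v u := by rw [hanti, neg_neg]
    _ = T v w u := hsymm ..
    _ = -T v u w := hanti ..
    _ = -T u v w := by rw [hsymm]
  exact self_eq_neg.mp h

section
variable {E F G : Type*} [NormedAddCommGroup E] [NormedSpace ℝ E] [NormedAddCommGroup F]
  [NormedSpace ℝ F] [NormedAddCommGroup G] [NormedSpace ℝ G]

theorem ContinuousLinearMap.comp_fderiv_eq_zero_of_eventually_eq_zero {f : E → F} {x : E}
    (hf : DifferentiableAt ℝ f x) (Λ : F →L[ℝ] G) (h : ∀ᶠ y in 𝓝 x, Λ (f y) = 0) :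
    Λ.comp (fderiv ℝ f x) = 0 :=
  (Λ.hasFDerivAt.comp x hf.hasFDerivAt).unique ((hasFDerivAt_const 0 x).congr_of_eventuallyEq h)

theorem fderiv_fderiv_eq_zero_of_killing {U : Set E} (hU : IsOpen U) {X : E → E}
    (hX : ContDiffOn ℝ 2 X U) {B : E →L[ℝ] E →L[ℝ] ℝ} (hB : Function.Injective B)
    (hKill : ∀ x ∈ U, ∀ v w, B (fderiv ℝ X x v) w + B (fderiv ℝ X x w) v = 0)
    {x : E} (hx : x ∈ U) : fderiv ℝ (fderiv ℝ X) x = 0 := by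
  have hXx : ContDiffAt ℝ 2 X x := hX.contDiffAt (hU.mem_nhds hx)
  have hsymm : IsSymmSndFDerivAt ℝ X x := hXx.isSymmSndFDerivAt (by simp)
  have hanti : ∀ u v w,
      B (fderiv ℝ (fderiv ℝ X) x u v) w + B (fderiv ℝ (fderiv ℝ X) x u w) v = 0 := by
    intro u v w
    let Λ := (B.flip w).comp (apply ℝ E v) + (B.flip v).comp (apply ℝ E w)
    have hΛ := Λ.comp_fderiv_eq_zero_of_eventually_eq_zero
      ((hXx.fderiv_right (m := 1) le_rfl).differentiableAt one_ne_zero)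
      (by filter_upwards [hU.mem_nhds hx] with y hy using hKill y hy v w)
    simpa [Λ] using congr($hΛ u)
  have hT := eq_zero_of_symm_of_antisymm (T := fun u v w => B (fderiv ℝ (fderiv ℝ X) x u v) w)
    (fun u v w => by simp only [hsymm u v])
    (fun u v w => eq_neg_of_add_eq_zero_left (hanti u v w))
  exact ext fun u => ext fun v => (map_eq_zero_iff B hB).1 (ext fun w => hT u v w)

theorem IsOpen.eqOn_affine_of_fderiv_fderiv_eq_zero {U : Set E} (hU : IsOpen U)
    (hUc : IsPreconnected U) {f : E → F} (hf : ContDiffOn ℝ 2 f U)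
    (h : ∀ x ∈ U, fderiv ℝ (fderiv ℝ f) x = 0) {x₀ : E} (hx₀ : x₀ ∈ U) :
    U.EqOn f fun x => f x₀ + fderiv ℝ f x₀ (x - x₀) := by
  have hf' : DifferentiableOn ℝ (fderiv ℝ f) U :=
    (hf.fderiv_of_isOpen hU (m := 1) le_rfl).differentiableOn one_ne_zero
  have hconst : ∀ x ∈ U, fderiv ℝ f x = fderiv ℝ f x₀ := fun x hx =>
    hU.is_const_of_fderiv_eq_zero hUc hf' h hx hx₀
  refine hU.eqOn_of_fderiv_eq hUc (hf.differentiableOn two_ne_zero) (by fun_prop)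
    (fun x hx => ?_) hx₀ (by simp)
  rw [hconst x hx]
  simp [fderiv_sub_const]
end

section
variable {ι : Type*} [Fintype ι]

noncomputable def diagonalBilin (g : ι → ℝ) : (ι → ℝ) →L[ℝ] (ι → ℝ) →L[ℝ] ℝ :=
  ∑ μ, g μ • (proj μ).smulRight (proj μ)

@[simp] theorem diagonalBilin_apply (g v w : ι → ℝ) :
    diagonalBilin g v w = ∑ μ, g μ * (v μ * w μ) := by
  simp [diagonalBilin]

theorem diagonalBilin_injective [DecidableEq ι] {g : ι → ℝ} (hg : ∀ μ, g μ ≠ 0) :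
    Function.Injective (diagonalBilin g) := by
  refine (injective_iff_map_eq_zero _).2 fun v hv => funext fun μ => ?_
  have := congr($hv (Pi.single μ 1))
  simpa [Pi.single_apply, hg μ] using this

theorem diagonalBilin_apply_add_apply_swap_eq_zero [DecidableEq ι] {g : ι → ℝ}
    {A : (ι → ℝ) →L[ℝ] (ι → ℝ)}
    (h : ∀ μ ν, g μ * A (Pi.single ν 1) μ + g ν * A (Pi.single μ 1) ν = 0) (v w : ι → ℝ) :
    diagonalBilin g (A v) w + diagonalBilin g (A w) v = 0 := by
  have hK : (diagonalBilin g).comp A + ((diagonalBilin g).comp A).flip = 0 := by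
    refine coe_injective ((Pi.basisFun ℝ ι).ext fun ν => ?_)
    refine coe_injective ((Pi.basisFun ℝ ι).ext fun μ => ?_)
    simpa [Pi.single_apply] using h μ ν
  simpa using congr($hK v w)
end

theorem killing_field_affine_general
    (p n : ℕ)
    (U : Set (Fin n → ℝ)) (hU : IsOpen U) (hUconn : IsConnected U)
    (g : Fin n → ℝ) (hg : ∀ μ, g μ = if (μ : ℕ) < p then (1 : ℝ) else -1)
    (X : (Fin n → ℝ) → (Fin n → ℝ)) (hX : ContDiffOn ℝ (⊤ : ℕ∞) X U)
    (hKill : ∀ x ∈ U, ∀ μ ν : Fin n,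
      g μ * fderiv ℝ (fun y => X y μ) x (Pi.single ν 1)
        + g ν * fderiv ℝ (fun y => X y ν) x (Pi.single μ 1) = 0) :
    ∃ (ω : Fin n → Fin n → ℝ) (c : Fin n → ℝ),
      (∀ μ ν, g μ * ω μ ν = -(g ν * ω ν μ)) ∧
      ∀ x ∈ U, ∀ μ, X x μ = (∑ ν, ω μ ν * x ν) + c μ := by
  have hg0 : ∀ μ, g μ ≠ 0 := fun μ => by rw [hg μ]; split_ifs <;> norm_num
  have hX2 : ContDiffOn ℝ 2 X U := hX.of_le (WithTop.coe_le_coe.2 le_top)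
  have hKillD : ∀ x ∈ U, ∀ μ ν,
      g μ * fderiv ℝ X x (Pi.single ν 1) μ + g ν * fderiv ℝ X x (Pi.single μ 1) ν = 0 := by
    intro x hx μ ν
    have hXx := (hX2.contDiffAt (hU.mem_nhds hx)).differentiableAt two_ne_zero
    simpa [fderiv_apply hXx] using hKill x hx μ ν
  obtain ⟨x₀, hx₀⟩ := hUconn.nonempty
  have hAffine := hU.eqOn_affine_of_fderiv_fderiv_eq_zero hUconn.isPreconnected hX2
    (fun x hx => fderiv_fderiv_eq_zero_of_killing hU hX2 (diagonalBilin_injective hg0)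
      (fun y hy => diagonalBilin_apply_add_apply_swap_eq_zero (hKillD y hy)) hx) hx₀
  set A := fderiv ℝ X x₀
  refine ⟨fun μ ν => A (Pi.single ν 1) μ, X x₀ - A x₀,
    fun μ ν => eq_neg_of_add_eq_zero_left (hKillD x₀ hx₀ μ ν), fun x hx μ => ?_⟩
  have hAx : A x μ = ∑ ν, A (Pi.single ν 1) μ * x ν := by
    conv_lhs => rw [pi_eq_sum_univ' x]
    simp [mul_comm]
  rw [hAffine hx]
  simp only [map_sub, Pi.add_apply, Pi.sub_apply, hAx]
  ring

/-- A smooth vector field on an open connected subset of ℝ^n (n ≥ 2,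
flat metric of signature (p,q)) satisfying the Killing equation
∂_ν X_μ + ∂_μ X_ν = 0 is affine, X^μ(x) = ω^μ_ν x^ν + c^μ, with ω antisymmetric
with respect to g (i.e. ω_{μν} = −ω_{νμ}). -/
theorem killing_field_affine
    (p q n : ℕ) (hn : n = p + q) (hdim : 2 ≤ n)
    (U : Set (Fin n → ℝ)) (hU : IsOpen U) (hUconn : IsConnected U)
    (g : Fin n → ℝ) (hg : ∀ μ, g μ = if (μ : ℕ) < p then (1 : ℝ) else -1)
    (X : (Fin n → ℝ) → (Fin n → ℝ)) (hX : ContDiffOn ℝ (⊤ : ℕ∞) X U)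
    (hKill : ∀ x ∈ U, ∀ μ ν : Fin n,
      g μ * fderiv ℝ (fun y => X y μ) x (Pi.single ν 1)
        + g ν * fderiv ℝ (fun y => X y ν) x (Pi.single μ 1) = 0) :
    ∃ (ω : Fin n → Fin n → ℝ) (c : Fin n → ℝ),
      (∀ μ ν, g μ * ω μ ν = -(g ν * ω ν μ)) ∧
      ∀ x ∈ U, ∀ μ, X x μ = (∑ ν, ω μ ν * x ν) + c μ :=
  killing_field_affine_general p n U hU hUconn g hg X hX hKill
end
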